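/- arXiv:1811.04909 — 7 statements merged into one kernel-verified Lean document; each statement's English description precedes it below -/
import Mathlib

section
/- For nonzero vectors v, w ∈ ℂ^n, the total variation distance between their length-square distributions satisfies ‖q^(v) − q^(w)‖_TV ≤ 2‖v − w‖ / max(‖v‖, ‖w‖), where the total variation distance between probability distributions p, q on {1,…,n} is (1/2)·Σ_{i=1}^n |p_i − q_i|. -/
private theorem aux_tv {n : ℕ} (v w : EuclideanSpace ℂ (Fin n)) (hv : v ≠ 0) (hw : w ≠ 0)
    (hwv : ‖w‖ ≤ ‖v‖) :
    ∑ i, |‖v i‖ ^ 2 / ‖v‖ ^ 2 - ‖w i‖ ^ 2 / ‖w‖ ^ 2| ≤ 4 * ‖v - w‖ / ‖v‖ := by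
  have hα : (0:ℝ) < ‖v‖ := norm_pos_iff.mpr hv
  have hβ : (0:ℝ) < ‖w‖ := norm_pos_iff.mpr hw
  have hd : (0:ℝ) ≤ ‖v - w‖ := norm_nonneg _
  have nv : ‖v‖ ^ 2 = ∑ i, ‖v i‖ ^ 2 := by
    rw [EuclideanSpace.norm_eq, Real.sq_sqrt]; positivity
  have nw : ‖w‖ ^ 2 = ∑ i, ‖w i‖ ^ 2 := by
    rw [EuclideanSpace.norm_eq, Real.sq_sqrt]; positivity
  have nvw : ∑ i, ‖v i - w i‖ ^ 2 = ‖v - w‖ ^ 2 := by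
    rw [EuclideanSpace.norm_eq, Real.sq_sqrt]
    · simp [PiLp.sub_apply]
    · positivity
  -- S1 := ∑ |‖v i‖² - ‖w i‖²| ≤ (‖v‖+‖w‖) * ‖v-w‖, by Cauchy-Schwarz
  have S1 : ∑ i, |‖v i‖ ^ 2 - ‖w i‖ ^ 2| ≤ (‖v‖ + ‖w‖) * ‖v - w‖ := by
    have heq : ∀ i : Fin n, |‖v i‖ ^ 2 - ‖w i‖ ^ 2| = (‖v i‖ + ‖w i‖) * |‖v i‖ - ‖w i‖| := by
      intro i
      rw [← abs_of_nonneg (show (0:ℝ) ≤ ‖v i‖ + ‖w i‖ by positivity), ← abs_mul]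
      ring_nf
    have hcs := Finset.sum_mul_sq_le_sq_mul_sq Finset.univ
      (fun i => ‖v i‖ + ‖w i‖) (fun i => |‖v i‖ - ‖w i‖|)
    have hA : ∑ i, (‖v i‖ + ‖w i‖) ^ 2 ≤ (‖v‖ + ‖w‖) ^ 2 := by
      have hab : (∑ i, ‖v i‖ * ‖w i‖) ^ 2 ≤ (‖v‖ * ‖w‖) ^ 2 := by
        rw [mul_pow, nv, nw]
        exact Finset.sum_mul_sq_le_sq_mul_sq Finset.univ (fun i => ‖v i‖) (fun i => ‖w i‖)
      have hab' : ∑ i, ‖v i‖ * ‖w i‖ ≤ ‖v‖ * ‖w‖ := by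
        have h3 : (0:ℝ) ≤ ∑ i, ‖v i‖ * ‖w i‖ :=
          Finset.sum_nonneg fun i _ => mul_nonneg (norm_nonneg _) (norm_nonneg _)
        nlinarith [mul_pos hα hβ]
      calc ∑ i, (‖v i‖ + ‖w i‖) ^ 2
          = (∑ i, ‖v i‖ ^ 2) + 2 * (∑ i, ‖v i‖ * ‖w i‖) + ∑ i, ‖w i‖ ^ 2 := by
            simp only [Finset.mul_sum, ← Finset.sum_add_distrib]
            exact Finset.sum_congr rfl fun i _ => by ring
        _ ≤ ‖v‖ ^ 2 + 2 * (‖v‖ * ‖w‖) + ‖w‖ ^ 2 := by rw [nv, nw]; linarith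
        _ = (‖v‖ + ‖w‖) ^ 2 := by ring
    have hB : ∑ i, |‖v i‖ - ‖w i‖| ^ 2 ≤ ‖v - w‖ ^ 2 := by
      rw [← nvw]
      apply Finset.sum_le_sum
      intro i _
      rw [sq_abs]
      have := abs_norm_sub_norm_le (v i) (w i)
      nlinarith [abs_nonneg (‖v i‖ - ‖w i‖), sq_abs (‖v i‖ - ‖w i‖)]
    have hsum : (∑ i, |‖v i‖ ^ 2 - ‖w i‖ ^ 2|) ^ 2 ≤ ((‖v‖ + ‖w‖) * ‖v - w‖) ^ 2 := by
      calc (∑ i, |‖v i‖ ^ 2 - ‖w i‖ ^ 2|) ^ 2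
          = (∑ i, (‖v i‖ + ‖w i‖) * |‖v i‖ - ‖w i‖|) ^ 2 := by
            congr 1; exact Finset.sum_congr rfl fun i _ => heq i
        _ ≤ (∑ i, (‖v i‖ + ‖w i‖) ^ 2) * ∑ i, |‖v i‖ - ‖w i‖| ^ 2 := hcs
        _ ≤ (‖v‖ + ‖w‖) ^ 2 * ‖v - w‖ ^ 2 := by
            apply mul_le_mul hA hB (Finset.sum_nonneg fun i _ => sq_nonneg _) (by positivity)
        _ = ((‖v‖ + ‖w‖) * ‖v - w‖) ^ 2 := by ring
    have h0 : (0:ℝ) ≤ ∑ i, |‖v i‖ ^ 2 - ‖w i‖ ^ 2| :=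
      Finset.sum_nonneg fun i _ => abs_nonneg _
    nlinarith [mul_nonneg (by positivity : (0:ℝ) ≤ ‖v‖ + ‖w‖) hd]
  -- termwise bound
  have hterm : ∀ i : Fin n, |‖v i‖ ^ 2 / ‖v‖ ^ 2 - ‖w i‖ ^ 2 / ‖w‖ ^ 2| ≤
      |‖v i‖ ^ 2 - ‖w i‖ ^ 2| / ‖v‖ ^ 2 + ‖w i‖ ^ 2 * (1 / ‖w‖ ^ 2 - 1 / ‖v‖ ^ 2) := by
    intro i
    have hsplit : ‖v i‖ ^ 2 / ‖v‖ ^ 2 - ‖w i‖ ^ 2 / ‖w‖ ^ 2 =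
        (‖v i‖ ^ 2 - ‖w i‖ ^ 2) / ‖v‖ ^ 2 - ‖w i‖ ^ 2 * (1 / ‖w‖ ^ 2 - 1 / ‖v‖ ^ 2) := by
      field_simp; ring
    rw [hsplit]
    refine (abs_sub _ _).trans ?_
    have h1 : |(‖v i‖ ^ 2 - ‖w i‖ ^ 2) / ‖v‖ ^ 2| = |‖v i‖ ^ 2 - ‖w i‖ ^ 2| / ‖v‖ ^ 2 := by
      rw [abs_div, abs_of_nonneg (by positivity : (0:ℝ) ≤ ‖v‖ ^ 2)]
    have h2 : |‖w i‖ ^ 2 * (1 / ‖w‖ ^ 2 - 1 / ‖v‖ ^ 2)| =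
        ‖w i‖ ^ 2 * (1 / ‖w‖ ^ 2 - 1 / ‖v‖ ^ 2) := by
      apply abs_of_nonneg
      apply mul_nonneg (sq_nonneg _)
      have : 1 / ‖v‖ ^ 2 ≤ 1 / ‖w‖ ^ 2 := by
        apply one_div_le_one_div_of_le (by positivity)
        nlinarith
      linarith
    rw [h1, h2]
  have hsum2 : ∑ i, |‖v i‖ ^ 2 / ‖v‖ ^ 2 - ‖w i‖ ^ 2 / ‖w‖ ^ 2| ≤
      (∑ i, |‖v i‖ ^ 2 - ‖w i‖ ^ 2|) / ‖v‖ ^ 2 + ‖w‖ ^ 2 * (1 / ‖w‖ ^ 2 - 1 / ‖v‖ ^ 2) := by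
    calc ∑ i, |‖v i‖ ^ 2 / ‖v‖ ^ 2 - ‖w i‖ ^ 2 / ‖w‖ ^ 2|
        ≤ ∑ i, (|‖v i‖ ^ 2 - ‖w i‖ ^ 2| / ‖v‖ ^ 2 + ‖w i‖ ^ 2 * (1 / ‖w‖ ^ 2 - 1 / ‖v‖ ^ 2)) :=
          Finset.sum_le_sum fun i _ => hterm i
      _ = (∑ i, |‖v i‖ ^ 2 - ‖w i‖ ^ 2|) / ‖v‖ ^ 2 +
          (∑ i, ‖w i‖ ^ 2) * (1 / ‖w‖ ^ 2 - 1 / ‖v‖ ^ 2) := by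
          rw [Finset.sum_add_distrib, Finset.sum_div, ← Finset.sum_mul]
      _ = (∑ i, |‖v i‖ ^ 2 - ‖w i‖ ^ 2|) / ‖v‖ ^ 2 + ‖w‖ ^ 2 * (1 / ‖w‖ ^ 2 - 1 / ‖v‖ ^ 2) := by
          rw [← nw]
  have hab2 : ‖v‖ - ‖w‖ ≤ ‖v - w‖ := (abs_le.mp (abs_norm_sub_norm_le v w)).2
  have hfinal : (∑ i, |‖v i‖ ^ 2 - ‖w i‖ ^ 2|) / ‖v‖ ^ 2 +
      ‖w‖ ^ 2 * (1 / ‖w‖ ^ 2 - 1 / ‖v‖ ^ 2) ≤ 4 * ‖v - w‖ / ‖v‖ := by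
    have key : ‖w‖ ^ 2 * (1 / ‖w‖ ^ 2 - 1 / ‖v‖ ^ 2) = (‖v‖ ^ 2 - ‖w‖ ^ 2) / ‖v‖ ^ 2 := by
      field_simp
    rw [key, ← add_div, div_le_div_iff₀ (by positivity) hα]
    have e1 : (∑ i, |‖v i‖ ^ 2 - ‖w i‖ ^ 2|) * ‖v‖ ≤ (‖v‖ + ‖w‖) * ‖v - w‖ * ‖v‖ :=
      mul_le_mul_of_nonneg_right S1 hα.le
    have e2 : (‖v‖ ^ 2 - ‖w‖ ^ 2) * ‖v‖ ≤ (‖v‖ + ‖w‖) * ‖v - w‖ * ‖v‖ := by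
      have : ‖v‖ ^ 2 - ‖w‖ ^ 2 ≤ (‖v‖ + ‖w‖) * ‖v - w‖ := by nlinarith
      exact mul_le_mul_of_nonneg_right this hα.le
    nlinarith [e1, e2, mul_nonneg hd hα.le]
  linarith [hsum2, hfinal]

/-- For nonzero vectors `v, w ∈ ℂ^n`, the total variation distance between
their length-square distributions `q^(v)_i = |v_i|²/‖v‖²` and `q^(w)` satisfies
`‖q^(v) − q^(w)‖_TV ≤ 2‖v − w‖ / max(‖v‖, ‖w‖)`, where the total variation distance is
`(1/2)·Σ_i |q^(v)_i − q^(w)_i|`. -/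
theorem stmt_0 {n : ℕ} (v w : EuclideanSpace ℂ (Fin n)) (hv : v ≠ 0) (hw : w ≠ 0) :
    (1 / 2 : ℝ) * ∑ i, |‖v i‖ ^ 2 / ‖v‖ ^ 2 - ‖w i‖ ^ 2 / ‖w‖ ^ 2| ≤
      2 * ‖v - w‖ / max ‖v‖ ‖w‖ := by
  rcases le_total ‖w‖ ‖v‖ with h | h
  · have := aux_tv v w hv hw h
    rw [max_eq_left h]
    have heq : (1 / 2 : ℝ) * (4 * ‖v - w‖ / ‖v‖) = 2 * ‖v - w‖ / ‖v‖ := by ring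
    linarith
  · have := aux_tv w v hw hv h
    rw [max_eq_right h]
    have hswap : ∑ i, |‖v i‖ ^ 2 / ‖v‖ ^ 2 - ‖w i‖ ^ 2 / ‖w‖ ^ 2| =
        ∑ i, |‖w i‖ ^ 2 / ‖w‖ ^ 2 - ‖v i‖ ^ 2 / ‖v‖ ^ 2| := by
      apply Finset.sum_congr rfl; intro i _; rw [abs_sub_comm]
    rw [hswap, show ‖v - w‖ = ‖w - v‖ from norm_sub_rev v w]
    have heq : (1 / 2 : ℝ) * (4 * ‖w - v‖ / ‖w‖) = 2 * ‖w - v‖ / ‖w‖ := by ring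
    linarith
end

section
/- Let x, x̃ ∈ ℂ^n be nonzero vectors and ε > 0. If ‖x̃ − x‖ ≤ ε‖x‖, then the total variation distance between the length-square distributions of x and x̃ is at most 2ε, i.e. (1/2)·Σ_{j=1}^n |q^(x)_j − q^(x̃)_j| ≤ 2ε. -/
/-!
With `a = x / ‖x‖` and `b = x̃ / ‖x̃‖`, the distributions are `q^(x)_j = |a_j|²` and
`q^(x̃)_j = |b_j|²`. Factoring `|a_j|² - |b_j|² = (|a_j| - |b_j|)(|a_j| + |b_j|)` and applying
Cauchy–Schwarz twice gives `∑ⱼ ||a_j|² - |b_j|²| ≤ ‖a - b‖ (‖a‖ + ‖b‖) ≤ 2 ‖a - b‖`, while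
normalising costs at most a factor two: `‖a - b‖ ≤ 2 ‖x - x̃‖ / ‖x‖ ≤ 2ε`.
-/

theorem norm_inv_norm_smul_le_one {E : Type*} [NormedAddCommGroup E] [NormedSpace ℝ E] (x : E) :
    ‖‖x‖⁻¹ • x‖ ≤ 1 := by
  rw [norm_smul, norm_inv, norm_norm]
  exact inv_mul_le_one_of_le₀ le_rfl (norm_nonneg x)

theorem norm_inv_norm_smul_sub_inv_norm_smul_le {E : Type*} [NormedAddCommGroup E]
    [NormedSpace ℝ E] {x : E} (hx : x ≠ 0) (y : E) :
    ‖‖x‖⁻¹ • x - ‖y‖⁻¹ • y‖ ≤ 2 * ‖x - y‖ / ‖x‖ := by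
  have hx' : 0 < ‖x‖ := norm_pos_iff.mpr hx
  rcases eq_or_ne y 0 with rfl | hy
  · rw [smul_zero, sub_zero, sub_zero, mul_div_assoc, div_self hx'.ne', mul_one]
    linarith [norm_inv_norm_smul_le_one x]
  have hy' : 0 < ‖y‖ := norm_pos_iff.mpr hy
  have hsplit : ‖x‖⁻¹ • x - ‖y‖⁻¹ • y = ‖x‖⁻¹ • (x - y) + (‖x‖⁻¹ - ‖y‖⁻¹) • y := by
    rw [smul_sub, sub_smul]; abel
  have hrescale : ‖(‖x‖⁻¹ - ‖y‖⁻¹) • y‖ = |‖y‖ - ‖x‖| / ‖x‖ := by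
    rw [norm_smul, Real.norm_eq_abs, ← abs_of_pos hy', ← abs_mul, abs_of_pos hy',
      ← abs_of_pos hx', ← abs_div, abs_of_pos hx']
    congr 1
    field_simp
  calc ‖‖x‖⁻¹ • x - ‖y‖⁻¹ • y‖
      ≤ ‖x - y‖ / ‖x‖ + |‖y‖ - ‖x‖| / ‖x‖ := by
        rw [hsplit, ← hrescale]
        refine (norm_add_le _ _).trans_eq ?_
        rw [norm_smul, norm_inv, norm_norm, inv_mul_eq_div]
    _ ≤ ‖x - y‖ / ‖x‖ + ‖x - y‖ / ‖x‖ := by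
        gcongr
        rw [norm_sub_rev]
        exact abs_norm_sub_norm_le y x
    _ = 2 * ‖x - y‖ / ‖x‖ := by ring

section EuclideanSpace

variable {𝕜 ι : Type*} [RCLike 𝕜] [Fintype ι]

theorem EuclideanSpace.sum_norm_mul_norm_le (u v : EuclideanSpace 𝕜 ι) :
    ∑ j, ‖u j‖ * ‖v j‖ ≤ ‖u‖ * ‖v‖ := by
  simpa only [EuclideanSpace.norm_eq] using
    Real.sum_mul_le_sqrt_mul_sqrt Finset.univ (fun j => ‖u j‖) (fun j => ‖v j‖)

theorem EuclideanSpace.sum_abs_norm_sq_sub_norm_sq_le (u v : EuclideanSpace 𝕜 ι) :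
    ∑ j, |‖u j‖ ^ 2 - ‖v j‖ ^ 2| ≤ ‖u - v‖ * (‖u‖ + ‖v‖) := by
  calc ∑ j, |‖u j‖ ^ 2 - ‖v j‖ ^ 2|
      = ∑ j, |‖u j‖ - ‖v j‖| * (‖u j‖ + ‖v j‖) := by
        refine Finset.sum_congr rfl fun j _ => ?_
        rw [← abs_of_nonneg (by positivity : 0 ≤ ‖u j‖ + ‖v j‖), ← abs_mul]
        ring_nf
    _ ≤ ∑ j, ‖(u - v) j‖ * ‖u j‖ + ∑ j, ‖(u - v) j‖ * ‖v j‖ := by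
        rw [← Finset.sum_add_distrib]
        gcongr with j
        rw [← mul_add, PiLp.sub_apply]
        gcongr
        exact abs_norm_sub_norm_le _ _
    _ ≤ ‖u - v‖ * ‖u‖ + ‖u - v‖ * ‖v‖ := by
        gcongr <;> exact EuclideanSpace.sum_norm_mul_norm_le _ _
    _ = ‖u - v‖ * (‖u‖ + ‖v‖) := by ring

theorem EuclideanSpace.norm_inv_norm_smul_apply_sq (x : EuclideanSpace 𝕜 ι) (j : ι) :
    ‖(‖x‖⁻¹ • x) j‖ ^ 2 = ‖x j‖ ^ 2 / ‖x‖ ^ 2 := by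
  rw [PiLp.smul_apply, norm_smul, norm_inv, norm_norm, mul_pow, inv_pow, inv_mul_eq_div]

end EuclideanSpace

theorem stmt_1_general {n : ℕ} (x xt : EuclideanSpace ℂ (Fin n)) (ε : ℝ)
    (hx : x ≠ 0) (h : ‖xt - x‖ ≤ ε * ‖x‖) :
    (1 / 2 : ℝ) * ∑ j, |‖x j‖ ^ 2 / ‖x‖ ^ 2 - ‖xt j‖ ^ 2 / ‖xt‖ ^ 2| ≤ 2 * ε := by
  set a := ‖x‖⁻¹ • x
  set b := ‖xt‖⁻¹ • xt
  have hab : ‖a - b‖ ≤ 2 * ε := by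
    refine (norm_inv_norm_smul_sub_inv_norm_smul_le hx xt).trans ?_
    rw [div_le_iff₀ (norm_pos_iff.mpr hx), norm_sub_rev]
    linarith
  have hsum := EuclideanSpace.sum_abs_norm_sq_sub_norm_sq_le a b
  simp only [a, b, EuclideanSpace.norm_inv_norm_smul_apply_sq] at hsum
  calc (1 / 2 : ℝ) * ∑ j, |‖x j‖ ^ 2 / ‖x‖ ^ 2 - ‖xt j‖ ^ 2 / ‖xt‖ ^ 2|
      ≤ 1 / 2 * (‖a - b‖ * (‖a‖ + ‖b‖)) := by gcongr
    _ ≤ 1 / 2 * (‖a - b‖ * 2) := by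
        gcongr
        linarith [norm_inv_norm_smul_le_one x, norm_inv_norm_smul_le_one xt]
    _ ≤ 2 * ε := by linarith

/-- If `x, x̃ ∈ ℂ^n` are nonzero, `ε > 0` and `‖x̃ − x‖ ≤ ε‖x‖`, then the
total variation distance between the length-square distributions of `x` and `x̃` is at most
`2ε`, i.e. `(1/2)·Σ_j |q^(x)_j − q^(x̃)_j| ≤ 2ε` where `q^(v)_j = |v_j|²/‖v‖²`. -/
theorem stmt_1 {n : ℕ} (x xt : EuclideanSpace ℂ (Fin n)) (ε : ℝ) (hε : 0 < ε)
    (hx : x ≠ 0) (hxt : xt ≠ 0) (h : ‖xt - x‖ ≤ ε * ‖x‖) :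
    (1 / 2 : ℝ) * ∑ j, |‖x j‖ ^ 2 / ‖x‖ ^ 2 - ‖xt j‖ ^ 2 / ‖xt‖ ^ 2| ≤ 2 * ε :=
  stmt_1_general x xt ε hx h
end

section
/- Let B ∈ ℂ^{n×n} be a matrix of rank at most k, and let V ∈ ℂ^{n×k} be a matrix whose k columns span both the column space of B and the column space of B† (equivalently, the range of B and the range of B† are contained in the span of the columns of V). Assume V†V is invertible. Then ‖B‖ ≤ ‖(V†V)^{-1}‖ · ‖V† B V‖. -/
open Matrix

/-- The `ℓ²` operator norm of a rectangular complex matrix, via the induced continuous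
linear map between Euclidean spaces. -/
noncomputable def toELin {m n : ℕ} (M : Matrix (Fin m) (Fin n) ℂ) :
    EuclideanSpace ℂ (Fin n) →L[ℂ] EuclideanSpace ℂ (Fin m) :=
  LinearMap.toContinuousLinearMap (Matrix.toEuclideanLin M)

/-!
Let `G = VᴴV`. Since the column spaces of `B` and `Bᴴ` lie in that of `V`, we can write
`B = V X = Y Vᴴ`, and then the projection `V G⁻¹ Vᴴ` onto the columns of `V` fixes `B` on both
sides, i.e. `B = W (VᴴBV) Wᴴ` with `W = V G⁻¹`. Submultiplicativity of the operator norm and the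
C⋆-identity `‖W‖² = ‖WᴴW‖ = ‖G⁻¹‖` give the bound.
-/

section Compression

variable {m n : Type*} [Fintype m] [Fintype n] [DecidableEq n] {R : Type*} [CommRing R]
  [StarRing R]

theorem Matrix.eq_mul_mul_mul_of_eq_mul_of_eq_mul {B : Matrix m m R} {V : Matrix m n R}
    {X : Matrix n m R} {Y : Matrix m n R} (hX : B = V * X) (hY : B = Y * Vᴴ)
    (hV : IsUnit (Vᴴ * V)) :
    B = V * (Vᴴ * V)⁻¹ * (Vᴴ * B * V) * ((Vᴴ * V)⁻¹ * Vᴴ) := by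
  have hdet : IsUnit (Vᴴ * V).det := (isUnit_iff_isUnit_det _).mp hV
  have hleft : V * (Vᴴ * V)⁻¹ * Vᴴ * B = B := by
    rw [hX, Matrix.mul_assoc, Matrix.mul_assoc, ← Matrix.mul_assoc Vᴴ,
      ← Matrix.mul_assoc (Vᴴ * V)⁻¹, nonsing_inv_mul _ hdet, Matrix.one_mul]
  have hright : B * (V * (Vᴴ * V)⁻¹ * Vᴴ) = B := by
    rw [hY, Matrix.mul_assoc, ← Matrix.mul_assoc Vᴴ, ← Matrix.mul_assoc Vᴴ,
      mul_nonsing_inv _ hdet, Matrix.one_mul]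
  calc B = V * (Vᴴ * V)⁻¹ * Vᴴ * B * (V * (Vᴴ * V)⁻¹ * Vᴴ) := by rw [hleft, hright]
    _ = _ := by simp only [Matrix.mul_assoc]

theorem Matrix.conjTranspose_mul_inv_gram (V : Matrix m n R) :
    (V * (Vᴴ * V)⁻¹)ᴴ = (Vᴴ * V)⁻¹ * Vᴴ := by
  rw [conjTranspose_mul, conjTranspose_nonsing_inv, conjTranspose_mul, conjTranspose_conjTranspose]

theorem Matrix.conjTranspose_mul_inv_gram_mul_self {V : Matrix m n R} (hV : IsUnit (Vᴴ * V)) :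
    (V * (Vᴴ * V)⁻¹)ᴴ * (V * (Vᴴ * V)⁻¹) = (Vᴴ * V)⁻¹ := by
  rw [conjTranspose_mul_inv_gram, Matrix.mul_assoc, ← Matrix.mul_assoc Vᴴ,
    mul_nonsing_inv _ ((isUnit_iff_isUnit_det _).mp hV), Matrix.mul_one]

end Compression

section toELin

variable {m n p q : ℕ}

theorem toELin_mul (A : Matrix (Fin m) (Fin n) ℂ) (B : Matrix (Fin n) (Fin p) ℂ) :
    toELin (A * B) = (toELin A).comp (toELin B) := by
  ext x i
  simp [toELin, toLpLin_apply, mulVec_mulVec]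

theorem toELin_conjTranspose (M : Matrix (Fin m) (Fin n) ℂ) :
    toELin Mᴴ = ContinuousLinearMap.adjoint (toELin M) := by
  apply ContinuousLinearMap.coe_injective
  change (toEuclideanLin Mᴴ : _ →ₗ[ℂ] _) = _
  rw [toEuclideanLin_conjTranspose_eq_adjoint, LinearMap.adjoint_eq_toCLM_adjoint]
  rfl

theorem norm_toELin_conjTranspose (M : Matrix (Fin m) (Fin n) ℂ) :
    ‖toELin Mᴴ‖ = ‖toELin M‖ := by
  rw [toELin_conjTranspose, LinearIsometryEquiv.norm_map]

theorem norm_toELin_conjTranspose_mul_self (M : Matrix (Fin m) (Fin n) ℂ) :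
    ‖toELin (Mᴴ * M)‖ = ‖toELin M‖ * ‖toELin M‖ := by
  rw [toELin_mul, toELin_conjTranspose, ContinuousLinearMap.norm_adjoint_comp_self]

theorem norm_toELin_mul_mul_le (A : Matrix (Fin m) (Fin n) ℂ) (B : Matrix (Fin n) (Fin p) ℂ)
    (C : Matrix (Fin p) (Fin q) ℂ) :
    ‖toELin (A * B * C)‖ ≤ ‖toELin A‖ * ‖toELin B‖ * ‖toELin C‖ := by
  rw [toELin_mul, toELin_mul]
  calc _ ≤ ‖(toELin A).comp (toELin B)‖ * ‖toELin C‖ := ContinuousLinearMap.opNorm_comp_le _ _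
    _ ≤ _ := by gcongr; exact ContinuousLinearMap.opNorm_comp_le _ _

theorem exists_eq_mul_of_range_toELin_le {M : Matrix (Fin n) (Fin m) ℂ}
    {V : Matrix (Fin n) (Fin p) ℂ}
    (h : LinearMap.range (toELin M : EuclideanSpace ℂ (Fin m) →ₗ[ℂ] EuclideanSpace ℂ (Fin n)) ≤
      LinearMap.range (toELin V : EuclideanSpace ℂ (Fin p) →ₗ[ℂ] EuclideanSpace ℂ (Fin n))) :
    ∃ X : Matrix (Fin p) (Fin m) ℂ, M = V * X := by
  choose y hy using fun j => h (LinearMap.mem_range_self _ (EuclideanSpace.single j (1 : ℂ)))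
  refine ⟨Matrix.of fun i j => y j i, ?_⟩
  ext i j
  have := congrArg (· i) (hy j)
  simpa [toELin, toLpLin_apply, mulVec, dotProduct, mul_apply] using this.symm

end toELin

theorem stmt_2_general {n k : ℕ} (B : Matrix (Fin n) (Fin n) ℂ) (V : Matrix (Fin n) (Fin k) ℂ)
    (hcol : LinearMap.range (toELin B : EuclideanSpace ℂ (Fin n) →ₗ[ℂ] EuclideanSpace ℂ (Fin n)) ≤
      LinearMap.range (toELin V : EuclideanSpace ℂ (Fin k) →ₗ[ℂ] EuclideanSpace ℂ (Fin n)))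
    (hrow : LinearMap.range (toELin Bᴴ : EuclideanSpace ℂ (Fin n) →ₗ[ℂ] EuclideanSpace ℂ (Fin n)) ≤
      LinearMap.range (toELin V : EuclideanSpace ℂ (Fin k) →ₗ[ℂ] EuclideanSpace ℂ (Fin n)))
    (hinv : IsUnit (Vᴴ * V)) :
    ‖toELin B‖ ≤ ‖toELin ((Vᴴ * V)⁻¹)‖ * ‖toELin (Vᴴ * B * V)‖ := by
  obtain ⟨X, hX⟩ := exists_eq_mul_of_range_toELin_le hcol
  obtain ⟨Y, hY⟩ := exists_eq_mul_of_range_toELin_le hrow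
  have hB : B = Yᴴ * Vᴴ := by rw [← conjTranspose_mul, ← hY, conjTranspose_conjTranspose]
  set W := V * (Vᴴ * V)⁻¹
  calc ‖toELin B‖ = ‖toELin (W * (Vᴴ * B * V) * Wᴴ)‖ := by
        rw [conjTranspose_mul_inv_gram, ← eq_mul_mul_mul_of_eq_mul_of_eq_mul hX hB hinv]
    _ ≤ ‖toELin W‖ * ‖toELin (Vᴴ * B * V)‖ * ‖toELin Wᴴ‖ := norm_toELin_mul_mul_le _ _ _
    _ = ‖toELin (Wᴴ * W)‖ * ‖toELin (Vᴴ * B * V)‖ := by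
        rw [norm_toELin_conjTranspose, norm_toELin_conjTranspose_mul_self]; ring
    _ = ‖toELin ((Vᴴ * V)⁻¹)‖ * ‖toELin (Vᴴ * B * V)‖ := by
        rw [conjTranspose_mul_inv_gram_mul_self hinv]

/-- Let `B ∈ ℂ^{n×n}` have rank at most `k` and let `V ∈ ℂ^{n×k}` be a matrix
whose columns span both the column space of `B` and the column space of `B†` (i.e. the
ranges of `B` and `B†` are contained in the span of the columns of `V`, which is the range
of `V`). If `V†V` is invertible then `‖B‖ ≤ ‖(V†V)⁻¹‖·‖V†BV‖` (operator norms). -/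
theorem stmt_2 {n k : ℕ} (B : Matrix (Fin n) (Fin n) ℂ) (V : Matrix (Fin n) (Fin k) ℂ)
    (hrank : B.rank ≤ k)
    (hcol : LinearMap.range (toELin B : EuclideanSpace ℂ (Fin n) →ₗ[ℂ] EuclideanSpace ℂ (Fin n)) ≤
      LinearMap.range (toELin V : EuclideanSpace ℂ (Fin k) →ₗ[ℂ] EuclideanSpace ℂ (Fin n)))
    (hrow : LinearMap.range (toELin Bᴴ : EuclideanSpace ℂ (Fin n) →ₗ[ℂ] EuclideanSpace ℂ (Fin n)) ≤
      LinearMap.range (toELin V : EuclideanSpace ℂ (Fin k) →ₗ[ℂ] EuclideanSpace ℂ (Fin n)))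
    (hinv : IsUnit (Vᴴ * V)) :
    ‖toELin B‖ ≤ ‖toELin ((Vᴴ * V)⁻¹)‖ * ‖toELin (Vᴴ * B * V)‖ :=
  stmt_2_general B V hcol hrow hinv
end

section
/- Let C ∈ ℂ^{r×c} and R ∈ ℂ^{r×n} be matrices with rank(R) = rank(C) = k, and let w^(1), …, w^(k) ∈ ℂ^r be an orthonormal system of vectors spanning the column space of C such that Σ_{ℓ=1}^k w^(ℓ)(w^(ℓ))† equals the orthogonal projection onto the column space of C, and ⟨w^(i), C C† w^(j)⟩ = δ_{ij}·σ̃_i² for positive reals σ̃_1, …, σ̃_k, where δ_{ij} is the Kronecker delta. Suppose ‖R R† − C C†‖ ≤ γ. Define ṽ^(ℓ) := R† w^(ℓ) / σ̃_ℓ. Then for all i, j ∈ {1,…,k}: |⟨ṽ^(i), ṽ^(j)⟩ − δ_{ij}| ≤ γ/(σ̃_i σ̃_j). -/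
open Matrix

/-!
Since `ṽ⁽ˡ⁾ = σ̃ₗ⁻¹ R† w⁽ˡ⁾`, the Gram entry `⟨ṽ⁽ⁱ⁾, ṽ⁽ʲ⁾⟩` equals `⟨w⁽ⁱ⁾, RR† w⁽ʲ⁾⟩ / (σ̃ᵢ σ̃ⱼ)`,
while `δᵢⱼ = ⟨w⁽ⁱ⁾, CC† w⁽ʲ⁾⟩ / (σ̃ᵢ σ̃ⱼ)`. Hence the deviation from `δᵢⱼ` is
`⟨w⁽ⁱ⁾, (RR† − CC†) w⁽ʲ⁾⟩ / (σ̃ᵢ σ̃ⱼ)`, and Cauchy–Schwarz for the unit vectors `w⁽ⁱ⁾, w⁽ʲ⁾`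
bounds its numerator by `‖RR† − CC†‖ ≤ γ`.
-/

section toELin

variable {m n p : ℕ}

lemma toELin_mul_apply (A : Matrix (Fin m) (Fin n) ℂ) (B : Matrix (Fin n) (Fin p) ℂ)
    (x : EuclideanSpace ℂ (Fin p)) : toELin (A * B) x = toELin A (toELin B x) := by
  simp [toELin]

lemma toELin_sub_apply (A B : Matrix (Fin m) (Fin n) ℂ) (x : EuclideanSpace ℂ (Fin n)) :
    toELin (A - B) x = toELin A x - toELin B x := by
  simp [toELin]

lemma inner_toELin_conjTranspose (R : Matrix (Fin m) (Fin n) ℂ)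
    (x y : EuclideanSpace ℂ (Fin m)) :
    inner ℂ (toELin Rᴴ x) (toELin Rᴴ y) = inner ℂ x (toELin (R * Rᴴ) y) := by
  rw [toELin_mul_apply]
  change inner ℂ (toEuclideanLin Rᴴ x) _ = inner ℂ x (toEuclideanLin R _)
  rw [toEuclideanLin_conjTranspose_eq_adjoint, LinearMap.adjoint_inner_left]

end toELin

lemma ContinuousLinearMap.norm_inner_apply_le_opNorm {E F : Type*}
    [NormedAddCommGroup E] [InnerProductSpace ℂ E] [NormedAddCommGroup F] [InnerProductSpace ℂ F]
    (T : E →L[ℂ] F) {x : F} {y : E} (hx : ‖x‖ = 1) (hy : ‖y‖ = 1) :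
    ‖inner ℂ x (T y)‖ ≤ ‖T‖ :=
  calc ‖inner ℂ x (T y)‖ ≤ ‖x‖ * ‖T y‖ := norm_inner_le_norm _ _
    _ ≤ ‖x‖ * (‖T‖ * ‖y‖) := by gcongr; exact T.le_opNorm y
    _ = ‖T‖ := by rw [hx, hy, one_mul, mul_one]

lemma inner_smul_conjTranspose_sub_eq {r c n : ℕ} (C : Matrix (Fin r) (Fin c) ℂ)
    (R : Matrix (Fin r) (Fin n) ℂ) {x y : EuclideanSpace ℂ (Fin r)} {a b : ℝ}
    (ha : a ≠ 0) (hb : b ≠ 0) {δ : ℂ}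
    (hC : inner ℂ x (toELin (C * Cᴴ) y) = a * b * δ) :
    inner ℂ ((a : ℂ)⁻¹ • toELin Rᴴ x) ((b : ℂ)⁻¹ • toELin Rᴴ y) - δ =
      ((a * b : ℝ) : ℂ)⁻¹ * inner ℂ x (toELin (R * Rᴴ - C * Cᴴ) y) := by
  have ha' : (a : ℂ) ≠ 0 := by exact_mod_cast ha
  have hb' : (b : ℂ) ≠ 0 := by exact_mod_cast hb
  rw [inner_smul_left, inner_smul_right, inner_toELin_conjTranspose, toELin_sub_apply,
    inner_sub_right, hC, Complex.conj_inv, Complex.conj_ofReal, Complex.ofReal_mul]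
  field_simp

theorem stmt_3_general {r c n k : ℕ} (C : Matrix (Fin r) (Fin c) ℂ) (R : Matrix (Fin r) (Fin n) ℂ)
    (w : Fin k → EuclideanSpace ℂ (Fin r)) (hw : Orthonormal ℂ w)
    (σ : Fin k → ℝ) (hσ : ∀ i, 0 < σ i)
    (hsing : ∀ i j, (inner ℂ (w i) (toELin (C * Cᴴ) (w j)) : ℂ) =
      if i = j then ((σ i : ℂ)) ^ 2 else 0)
    (γ : ℝ) (hγ : ‖toELin (R * Rᴴ - C * Cᴴ)‖ ≤ γ)
    (v : Fin k → EuclideanSpace ℂ (Fin n))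
    (hv : ∀ ℓ, v ℓ = ((σ ℓ : ℂ))⁻¹ • toELin Rᴴ (w ℓ)) :
    ∀ i j, ‖(inner ℂ (v i) (v j) : ℂ) - if i = j then 1 else 0‖ ≤
      γ / (σ i * σ j) := by
  intro i j
  have hCC : inner ℂ (w i) (toELin (C * Cᴴ) (w j)) =
      σ i * σ j * (if i = j then 1 else 0 : ℂ) := by
    rw [hsing]
    split_ifs with hij
    · rw [hij, sq, mul_one]
    · rw [mul_zero]
  have hσσ : 0 < σ i * σ j := mul_pos (hσ i) (hσ j)
  rw [hv, hv, inner_smul_conjTranspose_sub_eq C R (hσ i).ne' (hσ j).ne' hCC, norm_mul,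
    norm_inv, Complex.norm_real, Real.norm_of_nonneg hσσ.le, div_eq_inv_mul]
  gcongr
  exact ((toELin _).norm_inner_apply_le_opNorm (hw.1 i) (hw.1 j)).trans hγ

/-- Let `C ∈ ℂ^{r×c}`, `R ∈ ℂ^{r×n}` with `rank R = rank C = k`, let
`w⁽¹⁾,…,w⁽ᵏ⁾` be an orthonormal system spanning the column space of `C` (so that
`Σ w⁽ˡ⁾(w⁽ˡ⁾)†` is the orthogonal projection onto the column space of `C`), with
`⟨w⁽ⁱ⁾, CC† w⁽ʲ⁾⟩ = δᵢⱼ σ̃ᵢ²` for positive reals `σ̃ᵢ`. If `‖RR† − CC†‖ ≤ γ` and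
`ṽ⁽ˡ⁾ := R†w⁽ˡ⁾/σ̃ₗ`, then `|⟨ṽ⁽ⁱ⁾, ṽ⁽ʲ⁾⟩ − δᵢⱼ| ≤ γ/(σ̃ᵢσ̃ⱼ)` for all `i, j`. -/
theorem stmt_3 {r c n k : ℕ} (C : Matrix (Fin r) (Fin c) ℂ) (R : Matrix (Fin r) (Fin n) ℂ)
    (hC : C.rank = k) (hR : R.rank = k)
    (w : Fin k → EuclideanSpace ℂ (Fin r)) (hw : Orthonormal ℂ w)
    (hspan : Submodule.span ℂ (Set.range w) = LinearMap.range (toELin C).toLinearMap)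
    (σ : Fin k → ℝ) (hσ : ∀ i, 0 < σ i)
    (hsing : ∀ i j, (inner ℂ (w i) (toELin (C * Cᴴ) (w j)) : ℂ) =
      if i = j then ((σ i : ℂ)) ^ 2 else 0)
    (γ : ℝ) (hγ : ‖toELin (R * Rᴴ - C * Cᴴ)‖ ≤ γ)
    (v : Fin k → EuclideanSpace ℂ (Fin n))
    (hv : ∀ ℓ, v ℓ = ((σ ℓ : ℂ))⁻¹ • toELin Rᴴ (w ℓ)) :
    ∀ i j, ‖(inner ℂ (v i) (v j) : ℂ) - if i = j then 1 else 0‖ ≤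
      γ / (σ i * σ j) :=
  stmt_3_general C R w hw σ hσ hsing γ hγ v hv
end

section
/- Let C ∈ ℂ^{r×c} and R ∈ ℂ^{r×n} be matrices with rank(R) = rank(C) = k, and let w^(1), …, w^(k) ∈ ℂ^r be an orthonormal system of vectors spanning the column space of C such that Σ_{ℓ=1}^k w^(ℓ)(w^(ℓ))† equals the orthogonal projection onto the column space of C, and ⟨w^(i), C C† w^(j)⟩ = δ_{ij}·σ̃_i² for positive reals σ̃_1, …, σ̃_k, where δ_{ij} is the Kronecker delta. Suppose ‖R R† − C C†‖ ≤ γ. Define ṽ^(ℓ) := R† w^(ℓ) / σ̃_ℓ. Then for all i, j ∈ {1,…,k}: |⟨ṽ^(i), R† R ṽ^(j)⟩ − δ_{ij}·σ̃_i²| ≤ γ·(2‖R‖² + γ)/(σ̃_i σ̃_j). -/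
open Matrix

lemma toELin_mul_apply_s6 {a b c : ℕ} (M : Matrix (Fin a) (Fin b) ℂ) (N : Matrix (Fin b) (Fin c) ℂ)
    (x : EuclideanSpace ℂ (Fin c)) : toELin (M * N) x = toELin M (toELin N x) := by
  simp [toELin, Matrix.toEuclideanLin_apply, Matrix.mulVec_mulVec]

lemma toELin_sub_apply_s6 {a b : ℕ} (M N : Matrix (Fin a) (Fin b) ℂ)
    (x : EuclideanSpace ℂ (Fin b)) : toELin (M - N) x = toELin M x - toELin N x := by
  simp [toELin, map_sub]

lemma toELin_adj {a b : ℕ} (M : Matrix (Fin a) (Fin b) ℂ) (x : EuclideanSpace ℂ (Fin a))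
    (y : EuclideanSpace ℂ (Fin b)) :
    (inner ℂ (toELin Mᴴ x) y : ℂ) = inner ℂ x (toELin M y) := by
  have h := Matrix.toEuclideanLin_conjTranspose_eq_adjoint M
  simp only [toELin, h]
  simpa using LinearMap.adjoint_inner_left (Matrix.toEuclideanLin M) y x

lemma toELin_adj_clm {a b : ℕ} (M : Matrix (Fin a) (Fin b) ℂ) :
    toELin Mᴴ = ContinuousLinearMap.adjoint (toELin M) := by
  rw [toELin, Matrix.toEuclideanLin_conjTranspose_eq_adjoint,
    LinearMap.adjoint_toContinuousLinearMap]
  rfl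

lemma toELin_norm_conjTranspose {a b : ℕ} (M : Matrix (Fin a) (Fin b) ℂ) :
    ‖toELin Mᴴ‖ = ‖toELin M‖ := by
  rw [toELin_adj_clm]
  exact ContinuousLinearMap.adjoint.norm_map _

lemma toELin_mul_s6 {a b c : ℕ} (M : Matrix (Fin a) (Fin b) ℂ) (N : Matrix (Fin b) (Fin c) ℂ) :
    toELin (M * N) = (toELin M).comp (toELin N) := by
  ext1 x; exact toELin_mul_apply_s6 M N x

lemma toELin_norm_mul_le {a b c : ℕ} (M : Matrix (Fin a) (Fin b) ℂ)
    (N : Matrix (Fin b) (Fin c) ℂ) : ‖toELin (M * N)‖ ≤ ‖toELin M‖ * ‖toELin N‖ := by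
  rw [toELin_mul_s6]; exact ContinuousLinearMap.opNorm_comp_le _ _

/-- Let `C ∈ ℂ^{r×c}`, `R ∈ ℂ^{r×n}` with `rank R = rank C = k`, let
`w⁽¹⁾,…,w⁽ᵏ⁾` be an orthonormal system spanning the column space of `C` (so that
`Σ w⁽ˡ⁾(w⁽ˡ⁾)†` is the orthogonal projection onto the column space of `C`), with
`⟨w⁽ⁱ⁾, CC† w⁽ʲ⁾⟩ = δᵢⱼ σ̃ᵢ²` for positive reals `σ̃ᵢ`. If `‖RR† − CC†‖ ≤ γ` and
`ṽ⁽ˡ⁾ := R†w⁽ˡ⁾/σ̃ₗ`, then for all `i, j`: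
`|⟨ṽ⁽ⁱ⁾, R†R ṽ⁽ʲ⁾⟩ − δᵢⱼ σ̃ᵢ²| ≤ γ·(2‖R‖² + γ)/(σ̃ᵢσ̃ⱼ)`. -/
theorem stmt_6 {r c n k : ℕ} (C : Matrix (Fin r) (Fin c) ℂ) (R : Matrix (Fin r) (Fin n) ℂ)
    (hC : C.rank = k) (hR : R.rank = k)
    (w : Fin k → EuclideanSpace ℂ (Fin r)) (hw : Orthonormal ℂ w)
    (hspan : Submodule.span ℂ (Set.range w) = LinearMap.range (toELin C).toLinearMap)
    (σ : Fin k → ℝ) (hσ : ∀ i, 0 < σ i)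
    (hsing : ∀ i j, (inner ℂ (w i) (toELin (C * Cᴴ) (w j)) : ℂ) =
      if i = j then ((σ i : ℂ)) ^ 2 else 0)
    (γ : ℝ) (hγ : ‖toELin (R * Rᴴ - C * Cᴴ)‖ ≤ γ)
    (v : Fin k → EuclideanSpace ℂ (Fin n))
    (hv : ∀ ℓ, v ℓ = ((σ ℓ : ℂ))⁻¹ • toELin Rᴴ (w ℓ)) :
    ∀ i j, ‖(inner ℂ (v i) (toELin (Rᴴ * R) (v j)) : ℂ) -
        if i = j then ((σ i : ℂ)) ^ 2 else 0‖ ≤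
      γ * (2 * ‖toELin R‖ ^ 2 + γ) / (σ i * σ j) := by
  intro i j
  have hγ0 : 0 ≤ γ := le_trans (norm_nonneg _) hγ
  have hσ0 : ∀ ℓ, (σ ℓ : ℂ) ≠ 0 := fun ℓ => by
    exact_mod_cast Complex.ofReal_ne_zero.mpr (hσ ℓ).ne'
  -- Step 1: CC† w j = σ j ^ 2 • w j
  have hBw : ∀ ℓ, toELin (C * Cᴴ) (w ℓ) = ((σ ℓ : ℂ)) ^ 2 • w ℓ := by
    intro ℓ
    set x := toELin (C * Cᴴ) (w ℓ) - ((σ ℓ : ℂ)) ^ 2 • w ℓ with hx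
    have hwmem : ∀ m, w m ∈ Submodule.span ℂ (Set.range w) :=
      fun m => Submodule.subset_span ⟨m, rfl⟩
    have hxmem : x ∈ Submodule.span ℂ (Set.range w) := by
      apply Submodule.sub_mem
      · rw [hspan, toELin_mul_apply_s6]
        exact ⟨_, rfl⟩
      · exact Submodule.smul_mem _ _ (hwmem ℓ)
    have hinner : ∀ m, (inner ℂ (w m) x : ℂ) = 0 := by
      intro m
      rw [hx, inner_sub_right, hsing m ℓ, inner_smul_right, orthonormal_iff_ite.mp hw m ℓ]
      by_cases h : m = ℓ <;> simp [h]
    have hxorth : x ∈ (Submodule.span ℂ (Set.range w))ᗮ := by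
      rw [Submodule.mem_orthogonal]
      intro u hu
      induction hu using Submodule.span_induction with
      | mem u hu => obtain ⟨m, rfl⟩ := hu; exact hinner m
      | zero => simp
      | add _ _ _ _ h1 h2 => rw [inner_add_left, h1, h2, add_zero]
      | smul a _ _ h1 => rw [inner_smul_left, h1, mul_zero]
    have : (inner ℂ x x : ℂ) = 0 :=
      (Submodule.mem_orthogonal _ x).mp hxorth x hxmem
    have hx0 : x = 0 := inner_self_eq_zero.mp this
    have := sub_eq_zero.mp hx0
    linear_combination (norm := module) this
  -- Step 2: ⟨w i, (CC†)² w j⟩ = δ σi² σj²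
  have hB2 : (inner ℂ (w i) (toELin ((C * Cᴴ) * (C * Cᴴ)) (w j)) : ℂ) =
      if i = j then ((σ i : ℂ)) ^ 2 * ((σ j : ℂ)) ^ 2 else 0 := by
    rw [toELin_mul_apply_s6, hBw j, ContinuousLinearMap.map_smul, hBw j, inner_smul_right,
      inner_smul_right, orthonormal_iff_ite.mp hw i j]
    by_cases h : i = j <;> simp [h] <;> ring
  -- Step 3: rewrite the inner product
  have key : (inner ℂ (v i) (toELin (Rᴴ * R) (v j)) : ℂ) =
      ((σ i : ℂ))⁻¹ * ((σ j : ℂ))⁻¹ *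
        inner ℂ (w i) (toELin ((R * Rᴴ) * (R * Rᴴ)) (w j)) := by
    rw [hv, hv, inner_smul_left, ContinuousLinearMap.map_smul, inner_smul_right]
    have hconj : (starRingEnd ℂ) ((σ i : ℂ))⁻¹ = ((σ i : ℂ))⁻¹ := by
      rw [map_inv₀, Complex.conj_ofReal]
    rw [hconj, toELin_adj]
    have hvec : toELin R (toELin (Rᴴ * R) (toELin Rᴴ (w j))) =
        toELin ((R * Rᴴ) * (R * Rᴴ)) (w j) := by
      have hm : R * (Rᴴ * R) * Rᴴ = (R * Rᴴ) * (R * Rᴴ) := by simp only [Matrix.mul_assoc]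
      rw [← toELin_mul_apply_s6, ← toELin_mul_apply_s6, hm]
    rw [hvec]
    ring
  -- Step 4: rewrite the difference
  set A := R * Rᴴ with hA
  set B := C * Cᴴ with hB
  have hdiff : (inner ℂ (v i) (toELin (Rᴴ * R) (v j)) : ℂ) -
      (if i = j then ((σ i : ℂ)) ^ 2 else 0) =
      ((σ i : ℂ))⁻¹ * ((σ j : ℂ))⁻¹ * inner ℂ (w i) (toELin (A * A - B * B) (w j)) := by
    rw [key, toELin_sub_apply_s6, inner_sub_right, hB2, mul_sub]
    by_cases h : i = j
    · subst h
      congr 1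
      field_simp [hσ0 i]
      simp only [if_true]
      ring
    · simp [h]
  -- Step 5: operator norm bounds
  have habs : ∀ (P : Matrix (Fin r) (Fin r) ℂ),
      ‖(inner ℂ (w i) (toELin P (w j)) : ℂ)‖ ≤ ‖toELin P‖ := by
    intro P
    calc ‖(inner ℂ (w i) (toELin P (w j)) : ℂ)‖ ≤ ‖w i‖ * ‖toELin P (w j)‖ :=
          norm_inner_le_norm _ _
      _ ≤ ‖w i‖ * (‖toELin P‖ * ‖w j‖) := by
          gcongr
          exact (toELin P).le_opNorm _
      _ = ‖toELin P‖ := by rw [hw.1 i, hw.1 j]; ring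
  have hnA : ‖toELin A‖ ≤ ‖toELin R‖ ^ 2 := by
    calc ‖toELin A‖ ≤ ‖toELin R‖ * ‖toELin Rᴴ‖ := toELin_norm_mul_le _ _
      _ = ‖toELin R‖ ^ 2 := by rw [toELin_norm_conjTranspose]; ring
  have hnB : ‖toELin B‖ ≤ ‖toELin R‖ ^ 2 + γ := by
    have heq : ∀ x, toELin B x = toELin A x - toELin (A - B) x := by
      intro x; rw [toELin_sub_apply_s6]; abel
    have : ‖toELin B‖ ≤ ‖toELin A‖ + ‖toELin (A - B)‖ := by
      have := norm_sub_le (toELin A) (toELin (A - B))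
      calc ‖toELin B‖ = ‖toELin A - toELin (A - B)‖ := by
            congr 1; ext1 x; exact heq x
        _ ≤ ‖toELin A‖ + ‖toELin (A - B)‖ := norm_sub_le _ _
    linarith
  have hsplit : A * A - B * B = A * (A - B) + (A - B) * B := by noncomm_ring
  have hDbound : ‖(inner ℂ (w i) (toELin (A * A - B * B) (w j)) : ℂ)‖ ≤
      γ * (2 * ‖toELin R‖ ^ 2 + γ) := by
    rw [hsplit]
    have hadd : toELin (A * (A - B) + (A - B) * B) (w j) =
        toELin (A * (A - B)) (w j) + toELin ((A - B) * B) (w j) := by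
      simp [toELin, map_add]
    calc ‖(inner ℂ (w i) (toELin (A * (A - B) + (A - B) * B) (w j)) : ℂ)‖
        ≤ ‖(inner ℂ (w i) (toELin (A * (A - B)) (w j)) : ℂ)‖ +
          ‖(inner ℂ (w i) (toELin ((A - B) * B) (w j)) : ℂ)‖ := by
          rw [hadd, inner_add_right]; exact norm_add_le _ _
      _ ≤ ‖toELin (A * (A - B))‖ + ‖toELin ((A - B) * B)‖ := add_le_add (habs _) (habs _)
      _ ≤ ‖toELin A‖ * ‖toELin (A - B)‖ + ‖toELin (A - B)‖ * ‖toELin B‖ :=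
          add_le_add (toELin_norm_mul_le _ _) (toELin_norm_mul_le _ _)
      _ ≤ γ * (2 * ‖toELin R‖ ^ 2 + γ) := by
          have h1 : ‖toELin (A - B)‖ ≤ γ := hγ
          have h2 : (0:ℝ) ≤ ‖toELin (A - B)‖ := norm_nonneg _
          have h3 : (0:ℝ) ≤ ‖toELin A‖ := norm_nonneg _
          have h4 : (0:ℝ) ≤ ‖toELin B‖ := norm_nonneg _
          nlinarith
  -- Conclusion
  rw [hdiff, norm_mul, norm_mul, norm_inv, norm_inv, Complex.norm_real, Complex.norm_real,
    Real.norm_eq_abs, Real.norm_eq_abs,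
    abs_of_pos (hσ i), abs_of_pos (hσ j)]
  have hfin : γ * (2 * ‖toELin R‖ ^ 2 + γ) / (σ i * σ j) =
      (σ i)⁻¹ * (σ j)⁻¹ * (γ * (2 * ‖toELin R‖ ^ 2 + γ)) := by
    field_simp [(hσ i).ne', (hσ j).ne']
  rw [hfin, mul_assoc, mul_assoc]
  have hpos : (0:ℝ) ≤ (σ i)⁻¹ := le_of_lt (inv_pos.mpr (hσ i))
  apply mul_le_mul_of_nonneg_left _ hpos
  exact mul_le_mul_of_nonneg_left hDbound (le_of_lt (inv_pos.mpr (hσ j)))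
end

section
/- Let A ∈ ℂ^{m×n}, let ṽ^(1), …, ṽ^(k) ∈ ℂ^n, let σ̃_1, …, σ̃_k > 0, and let Π denote the orthogonal projection onto the row space of A (the range of A†). Suppose ‖Σ_{ℓ=1}^k (1/σ̃_ℓ²)·ṽ^(ℓ)(ṽ^(ℓ))† A†A − Π‖ ≤ ε/2. Then for any x ∈ ℂ^n in the range of A† and any b ∈ ℂ^m with A†b = A†Ax, the vector x' := Σ_{ℓ=1}^k (⟨ṽ^(ℓ), A†b⟩/σ̃_ℓ²)·ṽ^(ℓ) satisfies ‖x' − x‖ ≤ (ε/2)·‖x‖. -/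
/-!
With `T = Σₗ σ̃ₗ⁻² ṽ⁽ˡ⁾(ṽ⁽ˡ⁾)† A†A`, the hypothesis `A†b = A†Ax` says exactly that `x' = T x`,
and `Π x = x` because `x` lies in the row space. Hence `x' - x = (T - Π) x`, whose norm is at
most `‖T - Π‖ ‖x‖`.
-/

open Matrix

/-- The outer product `v v†` of a vector with itself, as a continuous linear map
`x ↦ ⟨v, x⟩ • v`. -/
noncomputable def outer {n : ℕ} (v : EuclideanSpace ℂ (Fin n)) :
    EuclideanSpace ℂ (Fin n) →L[ℂ] EuclideanSpace ℂ (Fin n) :=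
  (ContinuousLinearMap.toSpanSingleton ℂ v).comp (innerSL ℂ v)

theorem outer_apply {n : ℕ} (v x : EuclideanSpace ℂ (Fin n)) :
    outer v x = inner ℂ v x • v :=
  rfl

theorem sum_smul_outer_comp_apply {ι E : Type*} [Fintype ι] [NormedAddCommGroup E]
    [NormedSpace ℂ E] {n : ℕ} (c : ι → ℂ) (v : ι → EuclideanSpace ℂ (Fin n))
    (B : E →L[ℂ] EuclideanSpace ℂ (Fin n)) (y : E) :
    (∑ ℓ, c ℓ • (outer (v ℓ)).comp B) y = ∑ ℓ, (c ℓ * inner ℂ (v ℓ) (B y)) • v ℓ := by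
  simp only [_root_.sum_apply, _root_.smul_apply,
    ContinuousLinearMap.comp_apply, outer_apply, smul_smul]

theorem ContinuousLinearMap.norm_apply_sub_le_of_apply_eq {𝕜 E F : Type*}
    [NontriviallyNormedField 𝕜] [SeminormedAddCommGroup E] [SeminormedAddCommGroup F]
    [NormedSpace 𝕜 E] [NormedSpace 𝕜 F] (T P : E →L[𝕜] F) {x : E} {y : F} (hPx : P x = y) :
    ‖T x - y‖ ≤ ‖T - P‖ * ‖x‖ := by
  simpa [hPx] using (T - P).le_opNorm x

theorem stmt_9_general {m n k : ℕ} (A : Matrix (Fin m) (Fin n) ℂ)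
    (v : Fin k → EuclideanSpace ℂ (Fin n)) (σ : Fin k → ℝ) (ε : ℝ)
    (h : ‖(∑ ℓ, (((σ ℓ : ℂ)) ^ 2)⁻¹ • (outer (v ℓ)).comp (toELin (Aᴴ * A))) -
        (LinearMap.range (toELin Aᴴ).toLinearMap).subtypeL.comp
          (Submodule.orthogonalProjectionOnto (LinearMap.range (toELin Aᴴ).toLinearMap))‖ ≤ ε / 2)
    (x : EuclideanSpace ℂ (Fin n)) (hx : x ∈ LinearMap.range (toELin Aᴴ).toLinearMap)
    (b : EuclideanSpace ℂ (Fin m)) (hb : toELin Aᴴ b = toELin (Aᴴ * A) x) :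
    ‖(∑ ℓ, ((inner ℂ (v ℓ) (toELin Aᴴ b) : ℂ) / ((σ ℓ : ℂ)) ^ 2) • v ℓ) - x‖ ≤
      ε / 2 * ‖x‖ := by
  set K := LinearMap.range (toELin Aᴴ).toLinearMap
  set T := ∑ ℓ, (((σ ℓ : ℂ)) ^ 2)⁻¹ • (outer (v ℓ)).comp (toELin (Aᴴ * A))
  -- `K.starProjection` unfolds to the projection `Π` appearing in `h`.
  have hPx : K.starProjection x = x := K.starProjection_eq_self_iff.2 hx
  have hTx : T x = ∑ ℓ, ((inner ℂ (v ℓ) (toELin Aᴴ b) : ℂ) / ((σ ℓ : ℂ)) ^ 2) • v ℓ := by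
    simp only [T, sum_smul_outer_comp_apply, hb, inv_mul_eq_div]
  rw [← hTx]
  exact (T.norm_apply_sub_le_of_apply_eq K.starProjection hPx).trans
    (mul_le_mul_of_nonneg_right h (norm_nonneg x))

/-- Let `A ∈ ℂ^{m×n}`, `ṽ⁽¹⁾,…,ṽ⁽ᵏ⁾ ∈ ℂ^n`, `σ̃ₗ > 0`, and let `Π` be the
orthogonal projection onto the row space of `A` (the range of `A†`). If
`‖Σₗ (1/σ̃ₗ²)·ṽ⁽ˡ⁾(ṽ⁽ˡ⁾)† A†A − Π‖ ≤ ε/2`, then for any `x` in the range of `A†` and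
any `b` with `A†b = A†Ax`, the vector `x' = Σₗ (⟨ṽ⁽ˡ⁾, A†b⟩/σ̃ₗ²)·ṽ⁽ˡ⁾` satisfies
`‖x' − x‖ ≤ (ε/2)·‖x‖`. -/
theorem stmt_9 {m n k : ℕ} (A : Matrix (Fin m) (Fin n) ℂ)
    (v : Fin k → EuclideanSpace ℂ (Fin n)) (σ : Fin k → ℝ) (hσ : ∀ i, 0 < σ i) (ε : ℝ)
    (h : ‖(∑ ℓ, (((σ ℓ : ℂ)) ^ 2)⁻¹ • (outer (v ℓ)).comp (toELin (Aᴴ * A))) -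
        (LinearMap.range (toELin Aᴴ).toLinearMap).subtypeL.comp
          (Submodule.orthogonalProjectionOnto (LinearMap.range (toELin Aᴴ).toLinearMap))‖ ≤ ε / 2)
    (x : EuclideanSpace ℂ (Fin n)) (hx : x ∈ LinearMap.range (toELin Aᴴ).toLinearMap)
    (b : EuclideanSpace ℂ (Fin m)) (hb : toELin Aᴴ b = toELin (Aᴴ * A) x) :
    ‖(∑ ℓ, ((inner ℂ (v ℓ) (toELin Aᴴ b) : ℂ) / ((σ ℓ : ℂ)) ^ 2) • v ℓ) - x‖ ≤
      ε / 2 * ‖x‖ :=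
  stmt_9_general A v σ ε h x hx b hb
end

section
/- Let R ∈ ℂ^{r×n} be a matrix each of whose rows has Euclidean norm 1, let w ∈ ℂ^r be a nonzero vector, and let y := R†w ∈ ℂ^n. Consider one round of rejection sampling: pick a row index i ∈ {1,…,r} uniformly at random, then pick a column index j with probability |R_{ij}|², and accept with probability |y_j|²/(‖w‖²·‖R_{·j}‖²) whenever R_{·j} ≠ 0 (a valid probability, since |⟨w, R_{·j}⟩|² ≤ ‖w‖²·‖R_{·j}‖² by Cauchy–Schwarz). Then for every j with R_{·j} ≠ 0, the probability that the round accepts with output j equals Σ_{i=1}^r (1/r)·|R_{ij}|²·|y_j|²/(‖w‖²·‖R_{·j}‖²) = |y_j|²/(r·‖w‖²); consequently the total acceptance probability of a round is ‖y‖²/(r·‖w‖²), and conditioned on acceptance the output j is distributed according to the length-square distribution |y_j|²/‖y‖². -/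
open Matrix

/-- Let `R ∈ ℂ^{r×n}` have unit-norm rows, let `w ∈ ℂ^r` be nonzero and set
`y := R†w`. One round of rejection sampling picks `i ∈ {1,…,r}` uniformly, then `j` with
probability `|R_{ij}|²`, and accepts with probability `|y_j|²/(‖w‖²·‖R_{·j}‖²)` whenever
`R_{·j} ≠ 0`. Then: (1) for every `j` with `R_{·j} ≠ 0` the probability that the round
accepts with output `j` equals `|y_j|²/(r·‖w‖²)`; (2) the total acceptance probability is
`‖y‖²/(r·‖w‖²)`; and (3) if `y ≠ 0`, conditioned on acceptance, the output `j` is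
distributed according to the length-square distribution `|y_j|²/‖y‖²`. -/
theorem stmt_14 {r n : ℕ} (R : Matrix (Fin r) (Fin n) ℂ)
    (hrow : ∀ i, ∑ j, ‖R i j‖ ^ 2 = 1)
    (w : EuclideanSpace ℂ (Fin r)) (hw : w ≠ 0)
    (y : EuclideanSpace ℂ (Fin n)) (hy : ∀ j, y j = ∑ i, (starRingEnd ℂ) (R i j) * w i)
    (acc : Fin n → ℝ)
    (hacc : ∀ j, acc j = ∑ i, (1 / (r : ℝ)) * ‖R i j‖ ^ 2 *
      (if (fun i' => R i' j) ≠ 0 then ‖y j‖ ^ 2 / (‖w‖ ^ 2 * ∑ i', ‖R i' j‖ ^ 2) else 0)) :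
    (∀ j, (fun i' => R i' j) ≠ 0 → acc j = ‖y j‖ ^ 2 / ((r : ℝ) * ‖w‖ ^ 2)) ∧
      (∑ j, acc j = ‖y‖ ^ 2 / ((r : ℝ) * ‖w‖ ^ 2)) ∧
      (y ≠ 0 → ∀ j, acc j / (∑ j', acc j') = ‖y j‖ ^ 2 / ‖y‖ ^ 2) := by
  have hr : (r : ℝ) ≠ 0 := by
    rcases Nat.eq_zero_or_pos r with h | h
    · subst h
      exact absurd (PiLp.ext fun (i : Fin 0) => absurd i.pos (by simp [i.is_lt.not_gt]) : w = 0) hw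
    · exact_mod_cast h.ne'
  have hwn : ‖w‖ ≠ 0 := norm_ne_zero_iff.mpr hw
  -- key: acc j = ‖y j‖²/(r‖w‖²) for all j
  have key : ∀ j, acc j = ‖y j‖ ^ 2 / ((r : ℝ) * ‖w‖ ^ 2) := by
    intro j
    rw [hacc j]
    by_cases hcol : (fun i' => R i' j) = 0
    · have hyj : y j = 0 := by
        rw [hy j]
        apply Finset.sum_eq_zero
        intro i _
        have : R i j = 0 := congrFun hcol i
        simp [this]
      simp [hcol, hyj]
    · simp only [hcol, ne_eq, not_false_eq_true, if_true]
      rw [← Finset.sum_mul]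
      have hS : (∑ i', ‖R i' j‖ ^ 2) ≠ 0 := by
        intro h
        apply hcol
        funext i
        have hnn : ∀ i' ∈ Finset.univ, (0:ℝ) ≤ ‖R i' j‖ ^ 2 := fun i' _ => sq_nonneg _
        have := (Finset.sum_eq_zero_iff_of_nonneg hnn).mp h i (Finset.mem_univ i)
        simpa using this
      have : (∑ i : Fin r, (1 / (r : ℝ)) * ‖R i j‖ ^ 2)
          = (1 / (r : ℝ)) * (∑ i', ‖R i' j‖ ^ 2) := by
        rw [Finset.mul_sum]
      rw [this]
      have h2 : ‖w‖ ^ 2 ≠ 0 := pow_ne_zero _ hwn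
      rw [one_div_mul_eq_div, div_mul_div_comm,
        div_eq_div_iff (mul_ne_zero hr (mul_ne_zero h2 hS)) (mul_ne_zero hr h2)]
      ring
  have hnorm : ‖y‖ ^ 2 = ∑ j, ‖y j‖ ^ 2 := by
    rw [EuclideanSpace.norm_eq]
    rw [Real.sq_sqrt (by positivity)]
  have sum_acc : ∑ j, acc j = ‖y‖ ^ 2 / ((r : ℝ) * ‖w‖ ^ 2) := by
    simp_rw [key, hnorm, Finset.sum_div]
  refine ⟨fun j _ => key j, sum_acc, fun hy0 j => ?_⟩
  have hyn : ‖y‖ ^ 2 ≠ 0 := pow_ne_zero _ (norm_ne_zero_iff.mpr hy0)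
  have hrw : (r : ℝ) * ‖w‖ ^ 2 ≠ 0 := mul_ne_zero hr (pow_ne_zero _ hwn)
  rw [key j, sum_acc, div_div_div_eq, mul_comm ((r:ℝ) * ‖w‖ ^ 2) (‖y‖ ^ 2),
    mul_div_mul_right _ _ hrw]
end
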